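/- Let g be an invertible symmetric n×n real matrix and F a skew-symmetric n×n real matrix, and set 𝔽 := g⁻¹F and D := ⌊n/2⌋. Then there exist real numbers A₁, …, A_D (the invariant coefficients of 𝔽) such that 𝔽ⁿ = Σ_{b=1}^{D} A_b · 𝔽^{n−2b}. -/

import Mathlib

open Matrix Finset

open Polynomial

lemma coeff_comp_neg_X' {R : Type*} [CommRing R] (p : R[X]) (i : ℕ) :
    (p.comp (-X)).coeff i = (-1 : R) ^ i * p.coeff i := by
  induction p using Polynomial.induction_on' with
  | add p q hp hq => simp [add_comp, hp, hq, mul_add]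
  | monomial k a =>
    rw [monomial_comp, neg_pow, mul_comm ((-1:R[X])^k), coeff_C_mul,
      show ((-1:R[X])^k) = C ((-1:R)^k) by rw [map_pow, map_neg, C_1],
      coeff_mul_C, coeff_X_pow, coeff_monomial]
    by_cases h : k = i
    · subst h; ring_nf; simp
    · simp [h, Ne.symm h]

lemma my_charpoly_transpose {n : ℕ} (M : Matrix (Fin n) (Fin n) ℝ) :
    Mᵀ.charpoly = M.charpoly := by
  have h : charmatrix Mᵀ = (charmatrix M)ᵀ := by
    ext i j
    by_cases h : i = j
    · subst h; simp [charmatrix_apply]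
    · simp [charmatrix_apply, transpose_apply, diagonal_apply_ne _ h,
        diagonal_apply_ne' _ h]
  rw [Matrix.charpoly, h, det_transpose, Matrix.charpoly]

lemma my_charpoly_conj {n : ℕ} (P M : Matrix (Fin n) (Fin n) ℝ) (hP : IsUnit P.det) :
    (P * M * P⁻¹).charpoly = M.charpoly := by
  have hmap : charmatrix (P * M * P⁻¹) =
      (C : ℝ →+* ℝ[X]).mapMatrix P * charmatrix M * (C : ℝ →+* ℝ[X]).mapMatrix P⁻¹ := by
    rw [charmatrix, charmatrix, mul_sub, sub_mul]
    congr 1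
    · rw [← (scalar_commute (X : ℝ[X]) (Commute.all X) ((C : ℝ →+* ℝ[X]).mapMatrix P)).eq,
        mul_assoc, ← _root_.map_mul, Matrix.mul_nonsing_inv _ hP, _root_.map_one, mul_one]
    · rw [← _root_.map_mul, ← _root_.map_mul]
  rw [Matrix.charpoly, hmap, det_mul, det_mul, ← RingHom.map_det, ← RingHom.map_det,
    mul_comm, ← mul_assoc, ← _root_.map_mul, ← det_mul, Matrix.nonsing_inv_mul _ hP,
    det_one, _root_.map_one, one_mul, Matrix.charpoly]

lemma my_charpoly_neg {n : ℕ} (M : Matrix (Fin n) (Fin n) ℝ) :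
    (-M).charpoly = (-1 : ℝ[X]) ^ n * (M.charpoly.comp (-X)) := by
  let φ : ℝ[X] →ₐ[ℝ] ℝ[X] := aeval (-X)
  have h : charmatrix (-M) = -((charmatrix M).map φ) := by
    ext i j
    by_cases h : i = j
    · subst h
      simp [charmatrix_apply, map_apply, φ]
      ring
    · simp [charmatrix_apply, map_apply, diagonal_apply_ne _ h, φ]
  have hdet : ((charmatrix M).map (φ : ℝ[X] →+* ℝ[X])).det = φ (charmatrix M).det :=
    (RingHom.map_det _ _).symm
  have hφ : ∀ p : ℝ[X], φ p = p.comp (-X) := fun p => by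
    show aeval (-X : ℝ[X]) p = _
    rw [aeval_def, Polynomial.algebraMap_eq]
    rfl
  have hc : ((charmatrix M).map φ).det = M.charpoly.comp (-X) := by
    rw [show ((charmatrix M).map ⇑φ) = ((charmatrix M).map (φ : ℝ[X] →+* ℝ[X])) from rfl,
      hdet, hφ, Matrix.charpoly]
  rw [Matrix.charpoly, h, det_neg, Fintype.card_fin, hc]

/-- Cayley–Hamilton for `𝔽 = g⁻¹F` with `g` symmetric invertible and `F` skew-symmetric:
there exist invariant coefficients `A₁, …, A_D`, `D = ⌊n/2⌋`, with
`𝔽ⁿ = Σ_{b=1}^{D} A_b 𝔽^{n−2b}`. -/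
theorem cayley_hamilton_even_powers
    (n : ℕ) (g F : Matrix (Fin n) (Fin n) ℝ)
    (hg : g.IsSymm) (hginv : IsUnit g.det) (hF : Fᵀ = -F) :
    ∃ A : ℕ → ℝ,
      (g⁻¹ * F) ^ n = ∑ b ∈ Finset.Icc 1 (n / 2), A b • (g⁻¹ * F) ^ (n - 2 * b) := by
  set M := g⁻¹ * F with hMdef
  have hgt : gᵀ = g := hg
  have h1 : -Mᵀ = F * g⁻¹ := by
    rw [hMdef, transpose_mul, Matrix.transpose_nonsing_inv, hgt, hF]
    simp [neg_mul]
  have hsim : g * M * g⁻¹ = -Mᵀ := by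
    rw [h1, hMdef, ← mul_assoc, Matrix.mul_nonsing_inv _ hginv, one_mul]
  have key : M.charpoly = (-1 : ℝ[X]) ^ n * (M.charpoly.comp (-X)) := by
    conv_lhs => rw [← my_charpoly_conj g M hginv]
    rw [hsim, ← transpose_neg, my_charpoly_transpose, my_charpoly_neg]
  have hcoeff : ∀ i, i ≤ n → Odd (n - i) → M.charpoly.coeff i = 0 := by
    intro i hi hodd
    have h2 := congrArg (fun p => p.coeff i) key
    beta_reduce at h2
    rw [show ((-1 : ℝ[X]) ^ n) = C ((-1 : ℝ) ^ n) by rw [map_pow, map_neg, C_1],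
      coeff_C_mul, coeff_comp_neg_X', ← mul_assoc] at h2
    have hpow : (-1 : ℝ) ^ n * (-1 : ℝ) ^ i = -1 := by
      rw [← pow_add]
      refine Odd.neg_one_pow ?_
      rcases hodd with ⟨m, hm⟩
      exact ⟨m + i, by omega⟩
    rw [hpow] at h2
    linarith
  have hdeg : M.charpoly.natDegree = n := by
    rw [Matrix.charpoly_natDegree_eq_dim, Fintype.card_fin]
  have hCH : ∑ i ∈ Finset.range (n + 1), M.charpoly.coeff i • M ^ i = 0 := by
    have h3 := Matrix.aeval_self_charpoly M
    rw [Polynomial.aeval_eq_sum_range, hdeg] at h3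
    exact h3
  have hmonic := M.charpoly_monic
  have hMn : M ^ n = -∑ i ∈ Finset.range n, M.charpoly.coeff i • M ^ i := by
    have h4 := hCH
    have hc1 : M.charpoly.coeff n = 1 := by
      have h5 := hmonic.coeff_natDegree
      rwa [hdeg] at h5
    rw [Finset.sum_range_succ, hc1, one_smul] at h4
    exact eq_neg_of_add_eq_zero_right h4
  refine ⟨fun b => -(M.charpoly.coeff (n - 2 * b)), ?_⟩
  rw [hMn]
  have hstep :
      ∑ b ∈ Finset.Icc 1 (n / 2), (-(M.charpoly.coeff (n - 2 * b))) • M ^ (n - 2 * b)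
        = ∑ i ∈ (Finset.Icc 1 (n / 2)).image (fun b => n - 2 * b),
            (-(M.charpoly.coeff i)) • M ^ i := by
    rw [Finset.sum_image]
    intro x hx y hy hxy
    simp only [Finset.mem_coe, Finset.mem_Icc] at hx hy hxy
    omega
  have hsub : ∑ i ∈ (Finset.Icc 1 (n / 2)).image (fun b => n - 2 * b),
      (-(M.charpoly.coeff i)) • M ^ i
        = ∑ i ∈ Finset.range n, (-(M.charpoly.coeff i)) • M ^ i := by
    refine Finset.sum_subset ?_ ?_
    · intro i hi
      simp only [Finset.mem_image, Finset.mem_Icc] at hi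
      rcases hi with ⟨b, ⟨hb1, hb2⟩, rfl⟩
      simp only [Finset.mem_range]
      omega
    · intro i hir hni
      have hlt : i < n := Finset.mem_range.mp hir
      have hodd : Odd (n - i) := by
        rcases Nat.even_or_odd (n - i) with he | ho
        · exfalso
          apply hni
          rcases he with ⟨k, hk⟩
          simp only [Finset.mem_image, Finset.mem_Icc]
          exact ⟨k, ⟨by omega, by omega⟩, by omega⟩
        · exact ho
      rw [hcoeff i hlt.le hodd]
      simp
  rw [hstep, hsub]
  simp [neg_smul]
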